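/- Let B = {Y ∈ ℝ^{n1×n2×n3} : max_{ijk}|Y_{ijk}| ≤ a} with a > 0, let λ > 0, γ > 0, X ∈ ℝ^{n1×n2×n3}, and let Ψ(Y, L) = ‖L − Y‖²_F + λψ(Y). Suppose the SDAO iterates x_t = (Y_t, U_{1t}, U_{2t}, U_{3t}, G_t) with L_t = (U_{1t}, U_{2t}, U_{3t})·G_t are generated by: Y_{t+1} = argmin over Y ∈ B of Ψ̂(Y, L_t; Y_t), followed by successive exact minimization of the proximal least-squares subproblems for U_{1,t+1}, U_{2,t+1}, U_{3,t+1}, G_{t+1} against Y_{t+1}; assume the whole iterate sequence remains in a bounded set. Then every cluster point x* = (Y*, U₁*, U₂*, U₃*, G*) of the sequence (x_t) is a first-order stationary point of the problem of minimizing Ψ(Y, (U₁,U₂,U₃)·G) over Y ∈ B and unconstrained (U₁,U₂,U₃,G): namely, the gradient of Ψ(·, L*) at Y* satisfies the variational inequality ⟨∇_Y Ψ(Y*, L*), Y − Y*⟩ ≥ 0 for all Y ∈ B (where L* = (U₁*,U₂*,U₃*)·G*), and the gradients of (U₁,U₂,U₃,G) ↦ ‖(U₁,U₂,U₃)·G −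 Y*‖²_F vanish at (U₁*, U₂*, U₃*, G*). -/

import Mathlib

/-- The Welsch loss ψ(Y) = 2γ Σ_p (1 − exp(−(Y_p − X_p)²/(2γ))). -/
noncomputable def welsch {n1 n2 n3 : ℕ} (γ : ℝ) (X Y : Fin n1 × Fin n2 × Fin n3 → ℝ) : ℝ :=
  2 * γ * ∑ p : Fin n1 × Fin n2 × Fin n3, (1 - Real.exp (-(Y p - X p) ^ 2 / (2 * γ)))

/-- The exponential weight ω(Z)_p = exp(−(Z_p − X_p)²/(2γ)). -/
noncomputable def weight {n1 n2 n3 : ℕ} (γ : ℝ) (X Z : Fin n1 × Fin n2 × Fin n3 → ℝ) :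
    Fin n1 × Fin n2 × Fin n3 → ℝ :=
  fun p => Real.exp (-(Z p - X p) ^ 2 / (2 * γ))

/-- The quadratic surrogate ψ̂(Y; Z). -/
noncomputable def welschSurrogate {n1 n2 n3 : ℕ} (γ : ℝ)
    (X Y Z : Fin n1 × Fin n2 × Fin n3 → ℝ) : ℝ :=
  welsch γ X Z + ∑ p : Fin n1 × Fin n2 × Fin n3, weight γ X Z p * (Y p - X p) ^ 2
    - ∑ p : Fin n1 × Fin n2 × Fin n3, weight γ X Z p * (Z p - X p) ^ 2

/-- The objective Ψ(Y, L) = ‖L − Y‖²_F + λψ(Y). -/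
noncomputable def PsiObj {n1 n2 n3 : ℕ} (γ lam : ℝ)
    (X Y L : Fin n1 × Fin n2 × Fin n3 → ℝ) : ℝ :=
  (∑ p : Fin n1 × Fin n2 × Fin n3, (L p - Y p) ^ 2) + lam * welsch γ X Y

/-- The surrogate objective Ψ̂(Y, L; Z) = ‖L − Y‖²_F + λψ̂(Y; Z). -/
noncomputable def PsiSurrogate {n1 n2 n3 : ℕ} (γ lam : ℝ)
    (X Y L Z : Fin n1 × Fin n2 × Fin n3 → ℝ) : ℝ :=
  (∑ p : Fin n1 × Fin n2 × Fin n3, (L p - Y p) ^ 2) + lam * welschSurrogate γ X Y Z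

/-- The Tucker multilinear action `(A₁, A₂, A₃)·G` of three matrices on a core tensor,
defined entrywise by `[(A₁, A₂, A₃)·G]_{ijk} = Σ_{a,b,c} (A₁)_{ia}(A₂)_{jb}(A₃)_{kc} G_{abc}`. -/
noncomputable def tucker {m1 m2 m3 r1 r2 r3 : ℕ}
    (A1 : Matrix (Fin m1) (Fin r1) ℝ) (A2 : Matrix (Fin m2) (Fin r2) ℝ)
    (A3 : Matrix (Fin m3) (Fin r3) ℝ) (G : Fin r1 × Fin r2 × Fin r3 → ℝ) :
    Fin m1 × Fin m2 × Fin m3 → ℝ :=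
  fun p => ∑ a, ∑ b, ∑ c, A1 p.1 a * A2 p.2.1 b * A3 p.2.2 c * G (a, b, c)

/-- Squared Frobenius norm of a matrix: the sum of squares of all entries. -/
noncomputable def frobSqM {n m : ℕ} (A : Matrix (Fin n) (Fin m) ℝ) : ℝ :=
  ∑ i, ∑ j, A i j ^ 2

/-- Squared Frobenius norm of a tensor: the sum of squares of all entries. -/
noncomputable def frobSqT {n1 n2 n3 : ℕ} (Z : Fin n1 × Fin n2 × Fin n3 → ℝ) : ℝ :=
  ∑ p : Fin n1 × Fin n2 × Fin n3, Z p ^ 2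

/-!
The surrogate `Ψ̂(·, L; Z)` majorizes `Ψ(·, L)` with equality at `Z` (tangent-line inequality
for the concave map `x ↦ 2γ (1 - exp (-x / (2γ)))` applied to `x = (Y_p - X_p)²`), and it is a
quadratic in `Y` with curvature at least that of `‖L - Y‖²`, so its minimizer over the convex box
lies below its value at `Y_t` by at least `‖Y_{t+1} - Y_t‖²`. Each proximal block step lowers the
Tucker fit by at least `α ‖step‖²`. Hence `Ψ(Y_t, L_t) ≥ 0` decreases by at least the squared
length of every step, so the steps tend to zero. Along an ultrafilter converging to the cluster
point, `x_{t+1}` then converges to the same point, and the minimality of every subproblem passes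
to the limit: the cluster point is a fixed point of the iteration. The first-order conditions of
these minimizations are the claimed stationarity conditions.
-/

open Filter Matrix Topology

theorem nonneg_of_forall_mul_add_sq_mul_nonneg {c q : ℝ}
    (h : ∀ s : ℝ, 0 < s → s ≤ 1 → 0 ≤ s * c + s ^ 2 * q) : 0 ≤ c := by
  have hlim : Tendsto (fun s : ℝ => c + s * q) (𝓝[>] 0) (𝓝 c) := by
    have hs : Tendsto (fun s : ℝ => s) (𝓝[>] 0) (𝓝 0) := nhdsWithin_le_nhds
    simpa using (tendsto_const_nhds (x := c)).add (hs.mul_const q)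
  refine ge_of_tendsto hlim ?_
  filter_upwards [Ioo_mem_nhdsGT one_pos] with s ⟨hs0, hs1⟩
  have : 0 ≤ s * (c + s * q) := by linarith [h s hs0 hs1.le]
  exact nonneg_of_mul_nonneg_right this hs0

theorem hasDerivAt_zero_of_forall_le_add_mul_sq {f : ℝ → ℝ} {c : ℝ} (hf : DifferentiableAt ℝ f 0)
    (hmin : ∀ s, f 0 ≤ f s + c * s ^ 2) : HasDerivAt f 0 0 := by
  have hg : HasDerivAt (fun s => f s + c * s ^ 2) (deriv f 0) 0 :=
    (hf.hasDerivAt.add ((hasDerivAt_pow 2 (0 : ℝ)).const_mul c)).congr_deriv (by simp)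
  have hloc : IsLocalMin (fun s => f s + c * s ^ 2) 0 :=
    Eventually.of_forall fun s => by simpa using hmin s
  simpa [hloc.hasDerivAt_eq_zero hg] using hf.hasDerivAt

theorem tendsto_zero_of_sq_le {ι : Type*} {l : Filter ι} {f g : ι → ℝ}
    (hfg : ∀ t, f t ^ 2 ≤ g t) (hg : Tendsto g l (𝓝 0)) : Tendsto f l (𝓝 0) := by
  refine squeeze_zero_norm (fun t => Real.abs_le_sqrt (hfg t)) ?_
  simpa using hg.sqrt

theorem Filter.Tendsto.comp_add_one {G : Type*} [AddCommGroup G] [TopologicalSpace G]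
    [IsTopologicalAddGroup G] {l : Filter ℕ} (hl : l ≤ atTop) {x : ℕ → G} {x₀ : G}
    (hx : Tendsto x l (𝓝 x₀)) (hdiff : Tendsto (fun t => x (t + 1) - x t) atTop (𝓝 0)) :
    Tendsto (fun t => x (t + 1)) l (𝓝 x₀) := by
  simpa only [add_sub_cancel, add_zero] using hx.add (hdiff.mono_left hl)

theorem isMinOn_of_tendsto {ι P E : Type*} [TopologicalSpace P] [TopologicalSpace E]
    {l : Filter ι} [l.NeBot] {F : P → E → ℝ} (hF : Continuous (Function.uncurry F))
    {S : Set E} {p : ι → P} {x : ι → E} {p₀ : P} {x₀ : E}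
    (hp : Tendsto p l (𝓝 p₀)) (hx : Tendsto x l (𝓝 x₀))
    (hmin : ∀ k, IsMinOn (F (p k)) S (x k)) : IsMinOn (F p₀) S x₀ :=
  isMinOn_iff.2 fun y hy => le_of_tendsto_of_tendsto' ((hF.tendsto _).comp (hp.prodMk_nhds hx))
    ((hF.tendsto _).comp (hp.prodMk_nhds tendsto_const_nhds)) fun k => isMinOn_iff.1 (hmin k) y hy

theorem tendsto_zero_of_add_le {E D : ℕ → ℝ} (hE : ∀ t, 0 ≤ E t) (hD : ∀ t, 0 ≤ D t)
    (h : ∀ t, E (t + 1) + D t ≤ E t) : Tendsto D atTop (𝓝 0) := by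
  have hanti : Antitone E := antitone_nat_of_succ_le fun t => by linarith [h t, hD t]
  have hconv := tendsto_atTop_ciInf hanti ⟨0, by rintro _ ⟨t, rfl⟩; exact hE t⟩
  have hgap : Tendsto (fun t => E t - E (t + 1)) atTop (𝓝 0) := by
    simpa using hconv.sub (hconv.comp (tendsto_add_atTop_nat 1))
  exact squeeze_zero hD (fun t => by linarith [h t]) hgap

theorem convex_setOf_forall_abs_le {ι : Type*} (a : ℝ) :
    Convex ℝ {Y : ι → ℝ | ∀ i, |Y i| ≤ a} := by
  simpa [Set.pi, abs_le] using convex_pi (s := Set.univ) fun i _ => convex_Icc (-a) a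

theorem isClosed_setOf_forall_abs_le {ι : Type*} (a : ℝ) :
    IsClosed {Y : ι → ℝ | ∀ i, |Y i| ≤ a} := by
  simp only [Set.ofPred_forall]
  exact isClosed_iInter fun i => isClosed_le (by fun_prop) continuous_const

theorem hasDerivAt_line_zero_of_isMinOn_add_quadratic {E : Type*} [AddCommGroup E] [Module ℝ E]
    {f q : E → ℝ} {α : ℝ} (hq : ∀ (s : ℝ) (V : E), q (s • V) = s ^ 2 * q V) {x₀ : E}
    (hmin : IsMinOn (fun y => f y + α * q (y - x₀)) Set.univ x₀) (V : E)
    (hf : DifferentiableAt ℝ (fun s : ℝ => f (x₀ + s • V)) 0) :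
    HasDerivAt (fun s : ℝ => f (x₀ + s • V)) 0 0 := by
  have hq0 : q 0 = 0 := by simpa using hq 0 0
  refine hasDerivAt_zero_of_forall_le_add_mul_sq hf (c := α * q V) fun s => ?_
  have h := isMinOn_iff.1 hmin (x₀ + s • V) trivial
  simp only [sub_self, hq0, mul_zero, add_zero, add_sub_cancel_left, hq] at h
  rw [zero_smul, add_zero]
  linarith

section Frobenius

variable {n1 n2 n3 r1 r2 r3 : ℕ}

theorem frobSqT_nonneg (Z : Fin n1 × Fin n2 × Fin n3 → ℝ) : 0 ≤ frobSqT Z :=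
  Finset.sum_nonneg fun _ _ => sq_nonneg _

theorem frobSqM_nonneg (A : Matrix (Fin n1) (Fin r1) ℝ) : 0 ≤ frobSqM A :=
  Finset.sum_nonneg fun _ _ => Finset.sum_nonneg fun _ _ => sq_nonneg _

theorem frobSqT_smul (s : ℝ) (Z : Fin n1 × Fin n2 × Fin n3 → ℝ) :
    frobSqT (s • Z) = s ^ 2 * frobSqT Z := by
  simp only [frobSqT, Pi.smul_apply, smul_eq_mul, mul_pow, Finset.mul_sum]

theorem frobSqM_smul (s : ℝ) (A : Matrix (Fin n1) (Fin r1) ℝ) :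
    frobSqM (s • A) = s ^ 2 * frobSqM A := by
  simp only [frobSqM, Matrix.smul_apply, smul_eq_mul, mul_pow, Finset.mul_sum]

@[simp]
theorem frobSqT_zero : frobSqT (0 : Fin n1 × Fin n2 × Fin n3 → ℝ) = 0 := by simp [frobSqT]

@[simp]
theorem frobSqM_zero : frobSqM (0 : Matrix (Fin n1) (Fin r1) ℝ) = 0 := by simp [frobSqM]

theorem tendsto_zero_of_frobSqT_tendsto_zero {ι : Type*} {l : Filter ι}
    {Z : ι → Fin n1 × Fin n2 × Fin n3 → ℝ} (h : Tendsto (fun t => frobSqT (Z t)) l (𝓝 0)) :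
    Tendsto Z l (𝓝 0) :=
  tendsto_pi_nhds.2 fun p => tendsto_zero_of_sq_le
    (fun t => Finset.single_le_sum (fun q _ => sq_nonneg (Z t q)) (Finset.mem_univ p)) h

theorem tendsto_zero_of_frobSqM_tendsto_zero {ι : Type*} {l : Filter ι}
    {A : ι → Matrix (Fin n1) (Fin r1) ℝ} (h : Tendsto (fun t => frobSqM (A t)) l (𝓝 0)) :
    Tendsto A l (𝓝 0) := by
  refine tendsto_pi_nhds.2 fun i => tendsto_pi_nhds.2 fun j => tendsto_zero_of_sq_le (fun t => ?_) h
  calc A t i j ^ 2 ≤ ∑ j', A t i j' ^ 2 :=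
        Finset.single_le_sum (fun j' _ => sq_nonneg (A t i j')) (Finset.mem_univ j)
    _ ≤ frobSqM (A t) :=
        Finset.single_le_sum (f := fun i => ∑ j', A t i j' ^ 2)
          (fun i' _ => Finset.sum_nonneg fun _ _ => sq_nonneg _) (Finset.mem_univ i)

@[fun_prop]
theorem Continuous.frobSqT {α : Type*} [TopologicalSpace α] {f : α → Fin n1 × Fin n2 × Fin n3 → ℝ}
    (hf : Continuous f) : Continuous fun x => frobSqT (f x) := by
  unfold _root_.frobSqT; fun_prop

@[fun_prop]
theorem Continuous.frobSqM {α : Type*} [TopologicalSpace α] {f : α → Matrix (Fin n1) (Fin r1) ℝ}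
    (hf : Continuous f) : Continuous fun x => frobSqM (f x) := by
  unfold _root_.frobSqM; fun_prop

@[fun_prop]
theorem Continuous.tucker {α : Type*} [TopologicalSpace α] {f1 : α → Matrix (Fin n1) (Fin r1) ℝ}
    {f2 : α → Matrix (Fin n2) (Fin r2) ℝ} {f3 : α → Matrix (Fin n3) (Fin r3) ℝ}
    {g : α → Fin r1 × Fin r2 × Fin r3 → ℝ} (h1 : Continuous f1) (h2 : Continuous f2)
    (h3 : Continuous f3) (hg : Continuous g) :
    Continuous fun x => tucker (f1 x) (f2 x) (f3 x) (g x) := by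
  unfold _root_.tucker; fun_prop

end Frobenius

theorem two_mul_one_sub_exp_neg_div_le {γ : ℝ} (hγ : 0 < γ) (x y : ℝ) :
    2 * γ * (1 - Real.exp (-x / (2 * γ)))
      ≤ 2 * γ * (1 - Real.exp (-y / (2 * γ))) + Real.exp (-y / (2 * γ)) * (x - y) := by
  set E := Real.exp (-y / (2 * γ))
  set w := -(x - y) / (2 * γ)
  have hsplit : Real.exp (-x / (2 * γ)) = E * Real.exp w := by
    rw [← Real.exp_add]; congr 1; ring
  have hxy : x - y = -(2 * γ * w) := by simp only [w]; field_simp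
  have htangent := mul_le_mul_of_nonneg_left (Real.add_one_le_exp w)
    (by positivity : 0 ≤ 2 * γ * E)
  rw [hsplit, hxy]
  linarith

section Welsch

variable {n1 n2 n3 : ℕ} {γ lam : ℝ} {X : Fin n1 × Fin n2 × Fin n3 → ℝ}

theorem welsch_nonneg (hγ : 0 ≤ γ) (Y : Fin n1 × Fin n2 × Fin n3 → ℝ) : 0 ≤ welsch γ X Y := by
  refine mul_nonneg (by positivity) (Finset.sum_nonneg fun p _ => ?_)
  rw [sub_nonneg, Real.exp_le_one_iff]
  exact div_nonpos_of_nonpos_of_nonneg (neg_nonpos.2 (sq_nonneg _)) (by positivity)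

theorem welsch_le_welschSurrogate (hγ : 0 < γ) (Y Z : Fin n1 × Fin n2 × Fin n3 → ℝ) :
    welsch γ X Y ≤ welschSurrogate γ X Y Z := by
  have hsum : welschSurrogate γ X Y Z = ∑ p, (2 * γ * (1 - Real.exp (-(Z p - X p) ^ 2 / (2 * γ)))
      + weight γ X Z p * ((Y p - X p) ^ 2 - (Z p - X p) ^ 2)) := by
    simp only [welschSurrogate, welsch, Finset.mul_sum, mul_sub, ← Finset.sum_add_distrib,
      ← Finset.sum_sub_distrib, add_sub_assoc]
  rw [hsum, welsch, Finset.mul_sum]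
  exact Finset.sum_le_sum fun p _ => two_mul_one_sub_exp_neg_div_le hγ _ _

theorem PsiObj_le_PsiSurrogate (hγ : 0 < γ) (hlam : 0 ≤ lam)
    (Y L Z : Fin n1 × Fin n2 × Fin n3 → ℝ) :
    PsiObj γ lam X Y L ≤ PsiSurrogate γ lam X Y L Z :=
  add_le_add_right (mul_le_mul_of_nonneg_left (welsch_le_welschSurrogate hγ Y Z) hlam) _

theorem PsiSurrogate_self (L Z : Fin n1 × Fin n2 × Fin n3 → ℝ) :
    PsiSurrogate γ lam X Z L Z = PsiObj γ lam X Z L := by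
  simp [PsiSurrogate, PsiObj, welschSurrogate]

theorem PsiObj_eq_frobSqT_add (Y L : Fin n1 × Fin n2 × Fin n3 → ℝ) :
    PsiObj γ lam X Y L = frobSqT (L - Y) + lam * welsch γ X Y := rfl

@[fun_prop]
theorem Continuous.PsiSurrogate {α : Type*} [TopologicalSpace α]
    {f g h : α → Fin n1 × Fin n2 × Fin n3 → ℝ} (hf : Continuous f) (hg : Continuous g)
    (hh : Continuous h) : Continuous fun x => PsiSurrogate γ lam X (f x) (g x) (h x) := by
  unfold _root_.PsiSurrogate welschSurrogate welsch weight
  fun_prop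

/-- The gradient of `PsiSurrogate γ lam X · L Z` at `Y`; for `Z = Y` it is also the gradient of
`PsiObj γ lam X · L` at `Y`, since the surrogate touches `Ψ` to first order there. -/
noncomputable def gradPsiSurrogate (γ lam : ℝ) (X Y L Z : Fin n1 × Fin n2 × Fin n3 → ℝ) :
    Fin n1 × Fin n2 × Fin n3 → ℝ :=
  fun p => 2 * (Y p - L p) + lam * (2 * weight γ X Z p * (Y p - X p))

theorem PsiSurrogate_add_smul (Y L Z d : Fin n1 × Fin n2 × Fin n3 → ℝ) (s : ℝ) :
    PsiSurrogate γ lam X (Y + s • d) L Z = PsiSurrogate γ lam X Y L Z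
      + s * ∑ p, gradPsiSurrogate γ lam X Y L Z p * d p
      + s ^ 2 * ∑ p, (1 + lam * weight γ X Z p) * d p ^ 2 := by
  have hterm : ∀ p, (L p - (Y + s • d) p) ^ 2 + lam * (weight γ X Z p * ((Y + s • d) p - X p) ^ 2)
      = (L p - Y p) ^ 2 + lam * (weight γ X Z p * (Y p - X p) ^ 2)
        + s * (gradPsiSurrogate γ lam X Y L Z p * d p)
        + s ^ 2 * ((1 + lam * weight γ X Z p) * d p ^ 2) := fun p => by
    simp only [gradPsiSurrogate, Pi.add_apply, Pi.smul_apply, smul_eq_mul]; ring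
  have hsum := Finset.sum_congr rfl fun p (_ : p ∈ Finset.univ) => hterm p
  simp only [Finset.sum_add_distrib, ← Finset.mul_sum] at hsum
  simp only [PsiSurrogate, welschSurrogate]
  linear_combination hsum

theorem gradPsiSurrogate_inner_nonneg {S : Set (Fin n1 × Fin n2 × Fin n3 → ℝ)}
    (hS : Convex ℝ S) {Y₀ Y L Z : Fin n1 × Fin n2 × Fin n3 → ℝ}
    (hmin : IsMinOn (fun Y' => PsiSurrogate γ lam X Y' L Z) S Y₀) (hY₀ : Y₀ ∈ S) (hY : Y ∈ S) :
    0 ≤ ∑ p, gradPsiSurrogate γ lam X Y₀ L Z p * (Y - Y₀) p := by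
  refine nonneg_of_forall_mul_add_sq_mul_nonneg
    (q := ∑ p, (1 + lam * weight γ X Z p) * (Y - Y₀) p ^ 2) fun s hs0 hs1 => ?_
  have h := isMinOn_iff.1 hmin _ (hS.add_smul_sub_mem hY₀ hY ⟨hs0.le, hs1⟩)
  rw [PsiSurrogate_add_smul] at h
  linarith

theorem PsiSurrogate_add_frobSqT_le (hlam : 0 ≤ lam) {S : Set (Fin n1 × Fin n2 × Fin n3 → ℝ)}
    (hS : Convex ℝ S) {Y₀ Y L Z : Fin n1 × Fin n2 × Fin n3 → ℝ}
    (hmin : IsMinOn (fun Y' => PsiSurrogate γ lam X Y' L Z) S Y₀) (hY₀ : Y₀ ∈ S) (hY : Y ∈ S) :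
    PsiSurrogate γ lam X Y₀ L Z + frobSqT (Y₀ - Y) ≤ PsiSurrogate γ lam X Y L Z := by
  have hcurv : frobSqT (Y₀ - Y) ≤ ∑ p, (1 + lam * weight γ X Z p) * (Y - Y₀) p ^ 2 := by
    refine Finset.sum_le_sum fun p _ => ?_
    have hw : 0 ≤ lam * weight γ X Z p := mul_nonneg hlam (Real.exp_pos _).le
    simp only [Pi.sub_apply]
    nlinarith [sq_nonneg (Y p - Y₀ p)]
  have hexp := PsiSurrogate_add_smul (γ := γ) (lam := lam) (X := X) Y₀ L Z (Y - Y₀) 1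
  rw [one_smul, add_sub_cancel] at hexp
  linarith [gradPsiSurrogate_inner_nonneg hS hmin hY₀ hY]

end Welsch

abbrev SDAOState (n1 n2 n3 r1 r2 r3 : ℕ) : Type :=
  (Fin n1 × Fin n2 × Fin n3 → ℝ) × Matrix (Fin n1) (Fin r1) ℝ × Matrix (Fin n2) (Fin r2) ℝ
    × Matrix (Fin n3) (Fin r3) ℝ × (Fin r1 × Fin r2 × Fin r3 → ℝ)

structure IsSDAOSequence {n1 n2 n3 r1 r2 r3 : ℕ} (γ lam a α1 α2 : ℝ)
    (X : Fin n1 × Fin n2 × Fin n3 → ℝ) (Y : ℕ → Fin n1 × Fin n2 × Fin n3 → ℝ)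
    (U1 : ℕ → Matrix (Fin n1) (Fin r1) ℝ) (U2 : ℕ → Matrix (Fin n2) (Fin r2) ℝ)
    (U3 : ℕ → Matrix (Fin n3) (Fin r3) ℝ) (G : ℕ → Fin r1 × Fin r2 × Fin r3 → ℝ) : Prop where
  mem_box : ∀ t, ∀ p, |Y t p| ≤ a
  isMinOn_Y : ∀ t, IsMinOn
    (fun Y' => PsiSurrogate γ lam X Y' (tucker (U1 t) (U2 t) (U3 t) (G t)) (Y t))
    {Y' | ∀ p, |Y' p| ≤ a} (Y (t + 1))
  isMinOn_U1 : ∀ t, IsMinOn (fun V => frobSqT (tucker V (U2 t) (U3 t) (G t) - Y (t + 1))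
    + α1 * frobSqM (V - U1 t)) Set.univ (U1 (t + 1))
  isMinOn_U2 : ∀ t, IsMinOn (fun V => frobSqT (tucker (U1 (t + 1)) V (U3 t) (G t) - Y (t + 1))
    + α1 * frobSqM (V - U2 t)) Set.univ (U2 (t + 1))
  isMinOn_U3 : ∀ t, IsMinOn (fun V => frobSqT (tucker (U1 (t + 1)) (U2 (t + 1)) V (G t) - Y (t + 1))
    + α1 * frobSqM (V - U3 t)) Set.univ (U3 (t + 1))
  isMinOn_G : ∀ t, IsMinOn (fun H => frobSqT (tucker (U1 (t + 1)) (U2 (t + 1)) (U3 (t + 1)) H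
    - Y (t + 1)) + α2 * frobSqT (H - G t)) Set.univ (G (t + 1))

namespace IsSDAOSequence

variable {n1 n2 n3 r1 r2 r3 : ℕ} {γ lam a α1 α2 : ℝ} {X : Fin n1 × Fin n2 × Fin n3 → ℝ}
  {Y : ℕ → Fin n1 × Fin n2 × Fin n3 → ℝ} {U1 : ℕ → Matrix (Fin n1) (Fin r1) ℝ}
  {U2 : ℕ → Matrix (Fin n2) (Fin r2) ℝ} {U3 : ℕ → Matrix (Fin n3) (Fin r3) ℝ}
  {G : ℕ → Fin r1 × Fin r2 × Fin r3 → ℝ}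

theorem energy_decrease (h : IsSDAOSequence γ lam a α1 α2 X Y U1 U2 U3 G) (hγ : 0 < γ)
    (hlam : 0 ≤ lam) (t : ℕ) :
    PsiObj γ lam X (Y (t + 1)) (tucker (U1 (t + 1)) (U2 (t + 1)) (U3 (t + 1)) (G (t + 1)))
      + (frobSqT (Y (t + 1) - Y t) + α1 * frobSqM (U1 (t + 1) - U1 t)
        + α1 * frobSqM (U2 (t + 1) - U2 t) + α1 * frobSqM (U3 (t + 1) - U3 t)
        + α2 * frobSqT (G (t + 1) - G t))
      ≤ PsiObj γ lam X (Y t) (tucker (U1 t) (U2 t) (U3 t) (G t)) := by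
  have hY := PsiSurrogate_add_frobSqT_le hlam (convex_setOf_forall_abs_le a) (h.isMinOn_Y t)
    (h.mem_box (t + 1)) (h.mem_box t)
  rw [PsiSurrogate_self] at hY
  have hmaj := PsiObj_le_PsiSurrogate hγ hlam (X := X) (Y (t + 1))
    (tucker (U1 t) (U2 t) (U3 t) (G t)) (Y t)
  have h1 := isMinOn_iff.1 (h.isMinOn_U1 t) (U1 t) trivial
  have h2 := isMinOn_iff.1 (h.isMinOn_U2 t) (U2 t) trivial
  have h3 := isMinOn_iff.1 (h.isMinOn_U3 t) (U3 t) trivial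
  have h4 := isMinOn_iff.1 (h.isMinOn_G t) (G t) trivial
  simp only [sub_self, frobSqM_zero, frobSqT_zero, mul_zero, add_zero] at h1 h2 h3 h4
  rw [PsiObj_eq_frobSqT_add] at hmaj ⊢
  linarith

theorem tendsto_succ_sub (h : IsSDAOSequence γ lam a α1 α2 X Y U1 U2 U3 G) (hγ : 0 < γ)
    (hlam : 0 ≤ lam) (hα1 : 0 < α1) (hα2 : 0 < α2) :
    Tendsto (fun t => ((Y (t + 1), U1 (t + 1), U2 (t + 1), U3 (t + 1), G (t + 1)) -
      (Y t, U1 t, U2 t, U3 t, G t) : SDAOState n1 n2 n3 r1 r2 r3)) atTop (𝓝 0) := by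
  have hterms : ∀ t, 0 ≤ frobSqT (Y (t + 1) - Y t) ∧ 0 ≤ frobSqM (U1 (t + 1) - U1 t) ∧
      0 ≤ frobSqM (U2 (t + 1) - U2 t) ∧ 0 ≤ frobSqM (U3 (t + 1) - U3 t) ∧
      0 ≤ frobSqT (G (t + 1) - G t) := fun t =>
    ⟨frobSqT_nonneg _, frobSqM_nonneg _, frobSqM_nonneg _, frobSqM_nonneg _, frobSqT_nonneg _⟩
  have hD := tendsto_zero_of_add_le
    (E := fun t => PsiObj γ lam X (Y t) (tucker (U1 t) (U2 t) (U3 t) (G t)))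
    (fun t => add_nonneg (frobSqT_nonneg _) (mul_nonneg hlam (welsch_nonneg hγ.le _)))
    (fun t => by obtain ⟨_, _, _, _, _⟩ := hterms t; positivity) (h.energy_decrease hγ hlam)
  have hsmall : ∀ {c : ℝ} {f : ℕ → ℝ}, 0 < c → (∀ t, 0 ≤ f t) →
      (∀ t, c * f t ≤ frobSqT (Y (t + 1) - Y t) + α1 * frobSqM (U1 (t + 1) - U1 t)
        + α1 * frobSqM (U2 (t + 1) - U2 t) + α1 * frobSqM (U3 (t + 1) - U3 t)
        + α2 * frobSqT (G (t + 1) - G t)) → Tendsto f atTop (𝓝 0) := fun hc hf hle =>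
    squeeze_zero hf (fun t => (le_div_iff₀' hc).2 (hle t)) (by simpa using hD.div_const _)
  have hY := hsmall one_pos (fun t => (hterms t).1) fun t => by
    obtain ⟨_, _, _, _, _⟩ := hterms t; nlinarith
  have hU1 := hsmall hα1 (fun t => (hterms t).2.1) fun t => by
    obtain ⟨_, _, _, _, _⟩ := hterms t; nlinarith
  have hU2 := hsmall hα1 (fun t => (hterms t).2.2.1) fun t => by
    obtain ⟨_, _, _, _, _⟩ := hterms t; nlinarith
  have hU3 := hsmall hα1 (fun t => (hterms t).2.2.2.1) fun t => by
    obtain ⟨_, _, _, _, _⟩ := hterms t; nlinarith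
  have hG := hsmall hα2 (fun t => (hterms t).2.2.2.2) fun t => by
    obtain ⟨_, _, _, _, _⟩ := hterms t; nlinarith
  exact (tendsto_zero_of_frobSqT_tendsto_zero hY).prodMk_nhds
    ((tendsto_zero_of_frobSqM_tendsto_zero hU1).prodMk_nhds
    ((tendsto_zero_of_frobSqM_tendsto_zero hU2).prodMk_nhds
    ((tendsto_zero_of_frobSqM_tendsto_zero hU3).prodMk_nhds
    (tendsto_zero_of_frobSqT_tendsto_zero hG))))

theorem const_of_mapClusterPt (h : IsSDAOSequence γ lam a α1 α2 X Y U1 U2 U3 G) (hγ : 0 < γ)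
    (hlam : 0 ≤ lam) (hα1 : 0 < α1) (hα2 : 0 < α2) {x₀ : SDAOState n1 n2 n3 r1 r2 r3}
    (hclu : MapClusterPt x₀ atTop (fun t => (Y t, U1 t, U2 t, U3 t, G t))) :
    IsSDAOSequence γ lam a α1 α2 X (fun _ => x₀.1) (fun _ => x₀.2.1) (fun _ => x₀.2.2.1)
      (fun _ => x₀.2.2.2.1) (fun _ => x₀.2.2.2.2) := by
  obtain ⟨𝒰, h𝒰, hx⟩ := mapClusterPt_iff_ultrafilter.1 hclu
  have hx' := hx.comp_add_one h𝒰 (h.tendsto_succ_sub hγ hlam hα1 hα2)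
  have hp := hx.prodMk_nhds hx'
  have hbox : ∀ p, |x₀.1 p| ≤ a := (isClosed_setOf_forall_abs_le a).mem_of_tendsto hx'.fst_nhds
    (Eventually.of_forall fun k => h.mem_box (k + 1))
  have hY := isMinOn_of_tendsto
    (F := fun (p : SDAOState n1 n2 n3 r1 r2 r3 × SDAOState n1 n2 n3 r1 r2 r3) Y' =>
      PsiSurrogate γ lam X Y' (tucker p.1.2.1 p.1.2.2.1 p.1.2.2.2.1 p.1.2.2.2.2) p.1.1)
    (by fun_prop) hp hx'.fst_nhds h.isMinOn_Y
  have hU1 := isMinOn_of_tendsto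
    (F := fun (p : SDAOState n1 n2 n3 r1 r2 r3 × SDAOState n1 n2 n3 r1 r2 r3) V =>
      frobSqT (tucker V p.1.2.2.1 p.1.2.2.2.1 p.1.2.2.2.2 - p.2.1) + α1 * frobSqM (V - p.1.2.1))
    (by fun_prop) hp hx'.snd_nhds.fst_nhds h.isMinOn_U1
  have hU2 := isMinOn_of_tendsto
    (F := fun (p : SDAOState n1 n2 n3 r1 r2 r3 × SDAOState n1 n2 n3 r1 r2 r3) V =>
      frobSqT (tucker p.2.2.1 V p.1.2.2.2.1 p.1.2.2.2.2 - p.2.1) + α1 * frobSqM (V - p.1.2.2.1))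
    (by fun_prop) hp hx'.snd_nhds.snd_nhds.fst_nhds h.isMinOn_U2
  have hU3 := isMinOn_of_tendsto
    (F := fun (p : SDAOState n1 n2 n3 r1 r2 r3 × SDAOState n1 n2 n3 r1 r2 r3) V =>
      frobSqT (tucker p.2.2.1 p.2.2.2.1 V p.1.2.2.2.2 - p.2.1) + α1 * frobSqM (V - p.1.2.2.2.1))
    (by fun_prop) hp hx'.snd_nhds.snd_nhds.snd_nhds.fst_nhds h.isMinOn_U3
  have hG := isMinOn_of_tendsto
    (F := fun (p : SDAOState n1 n2 n3 r1 r2 r3 × SDAOState n1 n2 n3 r1 r2 r3) H =>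
      frobSqT (tucker p.2.2.1 p.2.2.2.1 p.2.2.2.2.1 H - p.2.1) + α2 * frobSqT (H - p.1.2.2.2.2))
    (by fun_prop) hp hx'.snd_nhds.snd_nhds.snd_nhds.snd_nhds h.isMinOn_G
  exact ⟨fun _ => hbox, fun _ => hY, fun _ => hU1, fun _ => hU2, fun _ => hU3, fun _ => hG⟩

end IsSDAOSequence

theorem sdao_cluster_points_stationary_general {n1 n2 n3 r1 r2 r3 : ℕ}
    (γ lam a α1 α2 : ℝ) (hγ : 0 < γ) (hlam : 0 < lam)
    (hα1 : 0 < α1) (hα2 : 0 < α2)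
    (X : Fin n1 × Fin n2 × Fin n3 → ℝ)
    (Y : ℕ → (Fin n1 × Fin n2 × Fin n3 → ℝ))
    (U1 : ℕ → Matrix (Fin n1) (Fin r1) ℝ) (U2 : ℕ → Matrix (Fin n2) (Fin r2) ℝ)
    (U3 : ℕ → Matrix (Fin n3) (Fin r3) ℝ) (G : ℕ → (Fin r1 × Fin r2 × Fin r3 → ℝ))
    (L : ℕ → (Fin n1 × Fin n2 × Fin n3 → ℝ))
    (hL : ∀ t, L t = tucker (U1 t) (U2 t) (U3 t) (G t))
    (hYbox : ∀ t, ∀ p, |Y t p| ≤ a)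
    (hYmin : ∀ t, ∀ Y' : Fin n1 × Fin n2 × Fin n3 → ℝ, (∀ p, |Y' p| ≤ a) →
      PsiSurrogate γ lam X (Y (t + 1)) (L t) (Y t) ≤ PsiSurrogate γ lam X Y' (L t) (Y t))
    (hU1 : ∀ t, ∀ V : Matrix (Fin n1) (Fin r1) ℝ,
      frobSqT (tucker (U1 (t + 1)) (U2 t) (U3 t) (G t) - Y (t + 1))
          + α1 * frobSqM (U1 (t + 1) - U1 t)
        ≤ frobSqT (tucker V (U2 t) (U3 t) (G t) - Y (t + 1)) + α1 * frobSqM (V - U1 t))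
    (hU2 : ∀ t, ∀ V : Matrix (Fin n2) (Fin r2) ℝ,
      frobSqT (tucker (U1 (t + 1)) (U2 (t + 1)) (U3 t) (G t) - Y (t + 1))
          + α1 * frobSqM (U2 (t + 1) - U2 t)
        ≤ frobSqT (tucker (U1 (t + 1)) V (U3 t) (G t) - Y (t + 1)) + α1 * frobSqM (V - U2 t))
    (hU3 : ∀ t, ∀ V : Matrix (Fin n3) (Fin r3) ℝ,
      frobSqT (tucker (U1 (t + 1)) (U2 (t + 1)) (U3 (t + 1)) (G t) - Y (t + 1))
          + α1 * frobSqM (U3 (t + 1) - U3 t)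
        ≤ frobSqT (tucker (U1 (t + 1)) (U2 (t + 1)) V (G t) - Y (t + 1))
          + α1 * frobSqM (V - U3 t))
    (hGmin : ∀ t, ∀ H : Fin r1 × Fin r2 × Fin r3 → ℝ,
      frobSqT (tucker (U1 (t + 1)) (U2 (t + 1)) (U3 (t + 1)) (G (t + 1)) - Y (t + 1))
          + α2 * frobSqT (G (t + 1) - G t)
        ≤ frobSqT (tucker (U1 (t + 1)) (U2 (t + 1)) (U3 (t + 1)) H - Y (t + 1))
          + α2 * frobSqT (H - G t)) :
    ∀ (Ys : Fin n1 × Fin n2 × Fin n3 → ℝ) (U1s : Matrix (Fin n1) (Fin r1) ℝ)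
      (U2s : Matrix (Fin n2) (Fin r2) ℝ) (U3s : Matrix (Fin n3) (Fin r3) ℝ)
      (Gs : Fin r1 × Fin r2 × Fin r3 → ℝ),
      MapClusterPt (Ys, U1s, U2s, U3s, Gs) atTop (fun t => (Y t, U1 t, U2 t, U3 t, G t)) →
      ((∀ Y' : Fin n1 × Fin n2 × Fin n3 → ℝ, (∀ p, |Y' p| ≤ a) →
          0 ≤ ∑ p : Fin n1 × Fin n2 × Fin n3,
            (2 * (Ys p - tucker U1s U2s U3s Gs p)
              + lam * (2 * Real.exp (-(Ys p - X p) ^ 2 / (2 * γ)) * (Ys p - X p)))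
            * (Y' p - Ys p)) ∧
       (∀ V : Matrix (Fin n1) (Fin r1) ℝ, HasDerivAt
          (fun s : ℝ => frobSqT (tucker (U1s + s • V) U2s U3s Gs - Ys)) 0 0) ∧
       (∀ V : Matrix (Fin n2) (Fin r2) ℝ, HasDerivAt
          (fun s : ℝ => frobSqT (tucker U1s (U2s + s • V) U3s Gs - Ys)) 0 0) ∧
       (∀ V : Matrix (Fin n3) (Fin r3) ℝ, HasDerivAt
          (fun s : ℝ => frobSqT (tucker U1s U2s (U3s + s • V) Gs - Ys)) 0 0) ∧
       (∀ H : Fin r1 × Fin r2 × Fin r3 → ℝ, HasDerivAt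
          (fun s : ℝ => frobSqT (tucker U1s U2s U3s (Gs + s • H) - Ys)) 0 0)) := by
  intro Ys U1s U2s U3s Gs hclu
  obtain rfl : L = fun t => tucker (U1 t) (U2 t) (U3 t) (G t) := funext hL
  have h : IsSDAOSequence γ lam a α1 α2 X Y U1 U2 U3 G :=
    ⟨hYbox, fun t => isMinOn_iff.2 (hYmin t), fun t => isMinOn_iff.2 fun V _ => hU1 t V,
      fun t => isMinOn_iff.2 fun V _ => hU2 t V, fun t => isMinOn_iff.2 fun V _ => hU3 t V,
      fun t => isMinOn_iff.2 fun H _ => hGmin t H⟩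
  have hlim := h.const_of_mapClusterPt hγ hlam.le hα1 hα2 hclu
  refine ⟨fun Y' hY' => gradPsiSurrogate_inner_nonneg (convex_setOf_forall_abs_le a)
      (hlim.isMinOn_Y 0) (hlim.mem_box 0) hY',
    fun V => hasDerivAt_line_zero_of_isMinOn_add_quadratic frobSqM_smul (hlim.isMinOn_U1 0) V ?_,
    fun V => hasDerivAt_line_zero_of_isMinOn_add_quadratic frobSqM_smul (hlim.isMinOn_U2 0) V ?_,
    fun V => hasDerivAt_line_zero_of_isMinOn_add_quadratic frobSqM_smul (hlim.isMinOn_U3 0) V ?_,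
    fun H => hasDerivAt_line_zero_of_isMinOn_add_quadratic frobSqT_smul (hlim.isMinOn_G 0) H ?_⟩
  all_goals
    simp only [frobSqT, tucker, Matrix.add_apply, Matrix.smul_apply, Pi.add_apply, Pi.smul_apply,
      Pi.sub_apply, smul_eq_mul]
    fun_prop

/-- Every cluster point of the SDAO iterates is a first-order stationary point: the
`Y`-gradient of `Ψ(·, L*)` at `Y*` satisfies the variational inequality over the box `B`,
and all directional derivatives of the Tucker least-squares fit with respect to the factor
matrices and the core tensor vanish at the cluster point. -/
theorem sdao_cluster_points_stationary {n1 n2 n3 r1 r2 r3 : ℕ}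
    (γ lam a α1 α2 : ℝ) (hγ : 0 < γ) (hlam : 0 < lam) (ha : 0 < a)
    (hα1 : 0 < α1) (hα2 : 0 < α2)
    (X : Fin n1 × Fin n2 × Fin n3 → ℝ)
    (Y : ℕ → (Fin n1 × Fin n2 × Fin n3 → ℝ))
    (U1 : ℕ → Matrix (Fin n1) (Fin r1) ℝ) (U2 : ℕ → Matrix (Fin n2) (Fin r2) ℝ)
    (U3 : ℕ → Matrix (Fin n3) (Fin r3) ℝ) (G : ℕ → (Fin r1 × Fin r2 × Fin r3 → ℝ))
    (L : ℕ → (Fin n1 × Fin n2 × Fin n3 → ℝ))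
    (hL : ∀ t, L t = tucker (U1 t) (U2 t) (U3 t) (G t))
    (hYbox : ∀ t, ∀ p, |Y t p| ≤ a)
    (hYmin : ∀ t, ∀ Y' : Fin n1 × Fin n2 × Fin n3 → ℝ, (∀ p, |Y' p| ≤ a) →
      PsiSurrogate γ lam X (Y (t + 1)) (L t) (Y t) ≤ PsiSurrogate γ lam X Y' (L t) (Y t))
    (hU1 : ∀ t, ∀ V : Matrix (Fin n1) (Fin r1) ℝ,
      frobSqT (tucker (U1 (t + 1)) (U2 t) (U3 t) (G t) - Y (t + 1))
          + α1 * frobSqM (U1 (t + 1) - U1 t)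
        ≤ frobSqT (tucker V (U2 t) (U3 t) (G t) - Y (t + 1)) + α1 * frobSqM (V - U1 t))
    (hU2 : ∀ t, ∀ V : Matrix (Fin n2) (Fin r2) ℝ,
      frobSqT (tucker (U1 (t + 1)) (U2 (t + 1)) (U3 t) (G t) - Y (t + 1))
          + α1 * frobSqM (U2 (t + 1) - U2 t)
        ≤ frobSqT (tucker (U1 (t + 1)) V (U3 t) (G t) - Y (t + 1)) + α1 * frobSqM (V - U2 t))
    (hU3 : ∀ t, ∀ V : Matrix (Fin n3) (Fin r3) ℝ,
      frobSqT (tucker (U1 (t + 1)) (U2 (t + 1)) (U3 (t + 1)) (G t) - Y (t + 1))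
          + α1 * frobSqM (U3 (t + 1) - U3 t)
        ≤ frobSqT (tucker (U1 (t + 1)) (U2 (t + 1)) V (G t) - Y (t + 1))
          + α1 * frobSqM (V - U3 t))
    (hGmin : ∀ t, ∀ H : Fin r1 × Fin r2 × Fin r3 → ℝ,
      frobSqT (tucker (U1 (t + 1)) (U2 (t + 1)) (U3 (t + 1)) (G (t + 1)) - Y (t + 1))
          + α2 * frobSqT (G (t + 1) - G t)
        ≤ frobSqT (tucker (U1 (t + 1)) (U2 (t + 1)) (U3 (t + 1)) H - Y (t + 1))
          + α2 * frobSqT (H - G t))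
    (hbounded : ∃ C : ℝ, ∀ t, (∀ p, |Y t p| ≤ C) ∧ (∀ i a', |U1 t i a'| ≤ C) ∧
      (∀ j b, |U2 t j b| ≤ C) ∧ (∀ k c, |U3 t k c| ≤ C) ∧ (∀ q, |G t q| ≤ C)) :
    ∀ (Ys : Fin n1 × Fin n2 × Fin n3 → ℝ) (U1s : Matrix (Fin n1) (Fin r1) ℝ)
      (U2s : Matrix (Fin n2) (Fin r2) ℝ) (U3s : Matrix (Fin n3) (Fin r3) ℝ)
      (Gs : Fin r1 × Fin r2 × Fin r3 → ℝ),
      MapClusterPt (Ys, U1s, U2s, U3s, Gs) atTop (fun t => (Y t, U1 t, U2 t, U3 t, G t)) →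
      ((∀ Y' : Fin n1 × Fin n2 × Fin n3 → ℝ, (∀ p, |Y' p| ≤ a) →
          0 ≤ ∑ p : Fin n1 × Fin n2 × Fin n3,
            (2 * (Ys p - tucker U1s U2s U3s Gs p)
              + lam * (2 * Real.exp (-(Ys p - X p) ^ 2 / (2 * γ)) * (Ys p - X p)))
            * (Y' p - Ys p)) ∧
       (∀ V : Matrix (Fin n1) (Fin r1) ℝ, HasDerivAt
          (fun s : ℝ => frobSqT (tucker (U1s + s • V) U2s U3s Gs - Ys)) 0 0) ∧
       (∀ V : Matrix (Fin n2) (Fin r2) ℝ, HasDerivAt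
          (fun s : ℝ => frobSqT (tucker U1s (U2s + s • V) U3s Gs - Ys)) 0 0) ∧
       (∀ V : Matrix (Fin n3) (Fin r3) ℝ, HasDerivAt
          (fun s : ℝ => frobSqT (tucker U1s U2s (U3s + s • V) Gs - Ys)) 0 0) ∧
       (∀ H : Fin r1 × Fin r2 × Fin r3 → ℝ, HasDerivAt
          (fun s : ℝ => frobSqT (tucker U1s U2s U3s (Gs + s • H) - Ys)) 0 0)) :=
  sdao_cluster_points_stationary_general γ lam a α1 α2 hγ hlam hα1 hα2 X Y U1 U2 U3 G L hL hYbox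
    hYmin hU1 hU2 hU3 hGmin
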